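/- For θ > 0 and 0 ≤ λ < 1, the sum over n ≥ 0 of P_n(θ, λ) = θ(θ + nλ)^{n-1} / n! · e^{-θ - nλ} equals 1; i.e., the Generalized Poisson Distribution is a probability distribution. -/

import Mathlib

/-!
Write `z` for `λ` and let it be complex. Expanding `exp (-n z)` into its Taylor series turns
`∑ₙ Pₙ(θ, z)` into a double series whose antidiagonal sums are, by Abel's identity
`∑ₖ C(N,k) x (x + k z)^(k-1) (-k z)^(N-k) = x^N`, the Poisson weights `e^{-θ} θ^N / N!`.
This rearrangement is legitimate when the double series converges absolutely, i.e. for small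
`‖z‖`. Since `n^n / n! ≤ eⁿ`, the series `∑ₙ Pₙ(θ, z)` converges locally uniformly on a
star-shaped domain containing `[0, 1)`, so its sum is holomorphic there, and it equals `1` on
the whole domain by the identity theorem.
-/

open Finset Nat Topology

def abelPoly {R : Type*} [Semiring R] (x z : R) : ℕ → R
  | 0 => 1
  | n + 1 => x * (x + (n + 1) * z) ^ n

@[simp, norm_cast]
lemma Complex.ofReal_abelPoly (x z : ℝ) (n : ℕ) :
    ((abelPoly x z n : ℝ) : ℂ) = abelPoly (x : ℂ) z n := by
  cases n <;> simp [abelPoly]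

lemma abelPoly_eq_mul_rpow {x : ℝ} (hx : x ≠ 0) (z : ℝ) (n : ℕ) :
    abelPoly x z n = x * (x + n * z) ^ ((n : ℝ) - 1) := by
  cases n with
  | zero => simp [abelPoly, Real.rpow_neg_one, hx]
  | succ n => simp [abelPoly, ← Real.rpow_natCast]

lemma sum_neg_one_pow_mul_choose_mul_pow_eq_zero {R : Type*} [CommRing R] (x z : R) {d n : ℕ}
    (h : d < n) : ∑ k ∈ range (n + 1), (-1) ^ (n - k) * (n.choose k : R) * (x + k * z) ^ d = 0 := by
  let P : Polynomial R := (Polynomial.C z * Polynomial.X + Polynomial.C x) ^ d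
  have hP : P.natDegree < n :=
    (Polynomial.natDegree_pow_le_of_le d Polynomial.natDegree_linear_le).trans_lt (by simpa using h)
  have := congr_fun (Polynomial.fwdDiff_iter_eq_zero_of_degree_lt hP) 0
  rw [fwdDiff_iter_eq_sum_shift] at this
  simp only [P, zero_add, nsmul_eq_mul, mul_one, Polynomial.eval_pow, Polynomial.eval_add,
    Polynomial.eval_mul, Polynomial.eval_C, Polynomial.eval_X, zsmul_eq_mul, Pi.zero_apply] at this
  rw [← this]
  refine sum_congr rfl fun k _ => ?_
  push_cast
  ring

section AbelIdentity

variable {𝕜 : Type*} [RCLike 𝕜] (x z : 𝕜)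

def abelSum (N : ℕ) (y : 𝕜) : 𝕜 :=
  ∑ k ∈ range (N + 1), N.choose k * abelPoly x z k * (y - k * z) ^ (N - k)

/-- At `y = -x` every term is `± x (x + k z)^N`, so the sum is an `(N+1)`-st finite difference of
a polynomial of degree `N`. -/
lemma abelSum_neg_self (N : ℕ) : abelSum x z (N + 1) (-x) = 0 := by
  have hterm : ∀ k ∈ range (N + 2), ((N + 1).choose k : 𝕜) * abelPoly x z k *
      (-x - k * z) ^ (N + 1 - k) = x * ((-1) ^ (N + 1 - k) * ((N + 1).choose k) * (x + k * z) ^ N) := by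
    intro k hk
    rcases k with _ | k
    · simp only [abelPoly, Nat.choose_zero_right, CharP.cast_eq_zero, zero_mul, sub_zero,
        add_zero, tsub_zero]
      ring
    · obtain ⟨j, hj⟩ := Nat.exists_eq_add_of_le (Nat.lt_succ_iff.mp (mem_range.mp hk))
      obtain rfl : N = k + j := by omega
      rw [show k + j + 1 - (k + 1) = j by omega,
        show -x - ((k + 1 : ℕ) : 𝕜) * z = -(x + (k + 1 : ℕ) * z) by ring, neg_pow, abelPoly,
        pow_add]
      push_cast
      ring
  rw [abelSum, sum_congr rfl hterm, ← mul_sum,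
    sum_neg_one_pow_mul_choose_mul_pow_eq_zero x z (Nat.lt_succ_self N), mul_zero]

lemma hasDerivAt_abelSum (N : ℕ) (y : 𝕜) :
    HasDerivAt (abelSum x z (N + 1)) ((N + 1) * abelSum x z N y) y := by
  have hterm : ∀ k ∈ range (N + 2), HasDerivAt
      (fun y => ((N + 1).choose k : 𝕜) * abelPoly x z k * (y - k * z) ^ (N + 1 - k))
      (((N + 1).choose k : 𝕜) * abelPoly x z k * ((N + 1 - k : ℕ) * (y - k * z) ^ (N - k))) y := by
    intro k _
    refine ((((hasDerivAt_id y).sub_const (k * z)).fun_pow (N + 1 - k)).const_mul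
      (((N + 1).choose k : 𝕜) * abelPoly x z k)).congr_deriv ?_
    rw [show N + 1 - k - 1 = N - k by omega, id, mul_one]
  refine (HasDerivAt.fun_sum hterm).congr_deriv ?_
  rw [sum_range_succ, Nat.sub_self, Nat.cast_zero, zero_mul, mul_zero, add_zero, abelSum, mul_sum]
  refine sum_congr rfl fun k _ => ?_
  have hcast : ((N + 1).choose k : 𝕜) * ((N + 1 - k : ℕ) : 𝕜) = N.choose k * (N + 1) := by
    exact_mod_cast (Nat.choose_mul_succ_eq N k).symm
  linear_combination (abelPoly x z k * (y - k * z) ^ (N - k)) * hcast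

theorem abelSum_eq (N : ℕ) (y : 𝕜) : abelSum x z N y = (x + y) ^ N := by
  induction N generalizing y with
  | zero => simp [abelSum, abelPoly]
  | succ N ih =>
    have hderiv : ∀ y, HasDerivAt (fun y => abelSum x z (N + 1) y - (x + y) ^ (N + 1)) 0 y := by
      intro y
      refine ((hasDerivAt_abelSum x z N y).sub
        (((hasDerivAt_id y).const_add x).fun_pow (N + 1))).congr_deriv ?_
      rw [ih, id, Nat.add_sub_cancel]
      push_cast
      ring
    have := is_const_of_deriv_eq_zero (fun y => (hderiv y).differentiableAt)
      (fun y => (hderiv y).deriv) y (-x)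
    rwa [abelSum_neg_self, add_neg_cancel, zero_pow (Nat.succ_ne_zero N), sub_zero,
      sub_eq_zero] at this

theorem sum_antidiagonal_abelPoly_div_factorial (N : ℕ) :
    ∑ p ∈ antidiagonal N, abelPoly x z p.1 / p.1 ! * ((-(p.1 * z)) ^ p.2 / p.2 !) = x ^ N / N ! := by
  have habel := abelSum_eq x z N 0
  simp only [abelSum, zero_sub, add_zero] at habel
  rw [Nat.sum_antidiagonal_eq_sum_range_succ_mk, ← habel, sum_div]
  refine sum_congr rfl fun k hk => ?_
  have hkN := mem_range_succ_iff.mp hk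
  have hC : (N.choose k : 𝕜) ≠ 0 := Nat.cast_ne_zero.mpr (Nat.choose_pos hkN).ne'
  rw [← Nat.choose_mul_factorial_mul_factorial hkN]
  push_cast
  field_simp

end AbelIdentity

lemma HasSum.sum_antidiagonal {α : Type*} [AddCommMonoid α] [TopologicalSpace α] [ContinuousAdd α]
    [RegularSpace α] {f : ℕ × ℕ → α} {a : α} (h : HasSum f a) :
    HasSum (fun n => ∑ p ∈ antidiagonal n, f p) a := by
  refine (HasAntidiagonal.sigmaAntidiagonalEquivProd.hasSum_iff.mpr h).sigma fun n => ?_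
  have := hasSum_fintype fun p : antidiagonal n => f p
  rwa [sum_coe_sort] at this

lemma Complex.hasSum_exp (w : ℂ) : HasSum (fun m => w ^ m / m !) (Complex.exp w) := by
  rw [Complex.exp_eq_exp_ℂ]
  exact NormedSpace.expSeries_div_hasSum_exp w

lemma Real.hasSum_exp (x : ℝ) : HasSum (fun m => x ^ m / m !) (Real.exp x) := by
  rw [Real.exp_eq_exp_ℝ]
  exact NormedSpace.expSeries_div_hasSum_exp x

lemma abelPoly_div_factorial_le {x w s : ℝ} (hx : 0 ≤ x) (hw : 0 ≤ w) (hs : 0 < s) (n : ℕ) :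
    abelPoly x w n / n ! ≤ (1 + s * x * Real.exp (s * x)) * (Real.exp (s * w) / s) ^ n := by
  rcases n with _ | n
  · simp only [abelPoly, factorial_zero, cast_one, div_one, pow_zero, mul_one]
    have : 0 ≤ s * x * Real.exp (s * x) := by positivity
    linarith
  · have hexp := Real.pow_div_factorial_le_exp (x := s * (x + (n + 1) * w)) (by positivity) n
    calc abelPoly x w (n + 1) / (n + 1)! ≤ x * (x + (n + 1) * w) ^ n / n ! := by
          simp only [abelPoly]
          gcongr
          exact Nat.le_succ n
      _ = x / s ^ n * ((s * (x + (n + 1) * w)) ^ n / n !) := by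
          rw [mul_pow]
          field_simp
      _ ≤ x / s ^ n * Real.exp (s * (x + (n + 1) * w)) := by gcongr
      _ = s * x * Real.exp (s * x) * (Real.exp (s * w) / s) ^ (n + 1) := by
          rw [div_pow, ← Real.exp_nat_mul, show s * (x + (n + 1) * w) = s * x + (n + 1) * (s * w)
            by ring, Real.exp_add]
          push_cast
          field_simp
          ring
      _ ≤ _ := by gcongr; linarith

lemma norm_abelPoly_le {𝕜 : Type*} [RCLike 𝕜] (x z : 𝕜) (n : ℕ) :
    ‖abelPoly x z n‖ ≤ abelPoly ‖x‖ ‖z‖ n := by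
  rcases n with _ | n
  · simp [abelPoly]
  · simp only [abelPoly, norm_mul, norm_pow]
    gcongr
    calc ‖x + (n + 1) * z‖ ≤ ‖x‖ + ‖((n + 1 : ℕ) : 𝕜) * z‖ := by push_cast; exact norm_add_le _ _
      _ = ‖x‖ + (n + 1) * ‖z‖ := by rw [norm_mul, RCLike.norm_natCast]; push_cast; ring

lemma norm_abelPoly_div_factorial_le {𝕜 : Type*} [RCLike 𝕜] (x z : 𝕜) {s : ℝ} (hs : 0 < s)
    (n : ℕ) : ‖abelPoly x z n‖ / n ! ≤
      (1 + s * ‖x‖ * Real.exp (s * ‖x‖)) * (Real.exp (s * ‖z‖) / s) ^ n :=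
  (div_le_div_of_nonneg_right (norm_abelPoly_le x z n) (by positivity)).trans
    (abelPoly_div_factorial_le (norm_nonneg x) (norm_nonneg z) hs n)

noncomputable def gpdTerm (θ z : ℂ) (n : ℕ) : ℂ :=
  abelPoly θ z n * Complex.exp (-θ - n * z) / n !

lemma norm_gpdTerm_le (θ z : ℂ) {s : ℝ} (hs : 0 < s) (n : ℕ) :
    ‖gpdTerm θ z n‖ ≤ Real.exp (-θ.re) * (1 + s * ‖θ‖ * Real.exp (s * ‖θ‖)) *
      (Real.exp (s * ‖z‖ - z.re) / s) ^ n := by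
  calc ‖gpdTerm θ z n‖ = ‖abelPoly θ z n‖ / n ! * (Real.exp (-θ.re) * Real.exp (-z.re) ^ n) := by
        rw [gpdTerm, norm_div, norm_mul, Complex.norm_exp, Complex.norm_natCast, ← Real.exp_nat_mul,
          ← Real.exp_add, show (-θ - n * z).re = -θ.re + n * -z.re by simp; ring]
        ring
    _ ≤ (1 + s * ‖θ‖ * Real.exp (s * ‖θ‖)) * (Real.exp (s * ‖z‖) / s) ^ n *
          (Real.exp (-θ.re) * Real.exp (-z.re) ^ n) := by
        gcongr
        exact norm_abelPoly_div_factorial_le θ z hs n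
    _ = _ := by
        rw [sub_eq_add_neg, Real.exp_add, mul_div_right_comm, mul_pow]
        ring

lemma differentiable_gpdTerm (θ : ℂ) (n : ℕ) : Differentiable ℂ fun z => gpdTerm θ z n := by
  rcases n with _ | n <;> simp only [gpdTerm, abelPoly] <;> fun_prop

noncomputable def gpdDoubleTerm (θ z : ℂ) (p : ℕ × ℕ) : ℂ :=
  abelPoly θ z p.1 / p.1 ! * ((-(p.1 * z)) ^ p.2 / p.2 !) * Complex.exp (-θ)

lemma hasSum_gpdDoubleTerm_row (θ z : ℂ) (n : ℕ) :
    HasSum (fun m => gpdDoubleTerm θ z (n, m)) (gpdTerm θ z n) := by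
  rw [show gpdTerm θ z n = abelPoly θ z n / n ! * Complex.exp (-(n * z)) * Complex.exp (-θ) by
    rw [gpdTerm, sub_eq_neg_add, Complex.exp_add]; ring]
  exact ((Complex.hasSum_exp (-(n * z))).mul_left (abelPoly θ z n / n !)).mul_right
    (Complex.exp (-θ))

lemma sum_antidiagonal_gpdDoubleTerm (θ z : ℂ) (N : ℕ) :
    ∑ p ∈ antidiagonal N, gpdDoubleTerm θ z p = θ ^ N / N ! * Complex.exp (-θ) := by
  rw [← sum_antidiagonal_abelPoly_div_factorial θ z N, sum_mul]
  rfl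

lemma summable_gpdDoubleTerm (θ : ℂ) {z : ℂ} (hz : Real.exp (3 * ‖z‖) < 2) :
    Summable (gpdDoubleTerm θ z) := by
  have hrow : ∀ n, HasSum (fun m => ‖gpdDoubleTerm θ z (n, m)‖)
      (‖abelPoly θ z n‖ / n ! * Real.exp (n * ‖z‖) * Real.exp (-θ.re)) := by
    intro n
    have hnorm : (fun m => ‖gpdDoubleTerm θ z (n, m)‖) =
        fun m => ‖abelPoly θ z n‖ / n ! * ((n * ‖z‖) ^ m / m !) * Real.exp (-θ.re) := by
      ext m
      simp [gpdDoubleTerm, Complex.norm_exp, mul_pow]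
    rw [hnorm]
    exact ((Real.hasSum_exp (n * ‖z‖)).mul_left (‖abelPoly θ z n‖ / n !)).mul_right
      (Real.exp (-θ.re))
  refine Summable.of_norm ((summable_prod_of_nonneg fun _ => norm_nonneg _).mpr
    ⟨fun n => (hrow n).summable, ?_⟩)
  simp_rw [fun n => (hrow n).tsum_eq]
  refine Summable.of_nonneg_of_le (fun n => by positivity) (fun n => ?_)
    (((summable_geometric_of_lt_one (by positivity) ((div_lt_one two_pos).mpr hz)).mul_left
      (1 + 2 * ‖θ‖ * Real.exp (2 * ‖θ‖))).mul_right (Real.exp (-θ.re)))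
  rw [show Real.exp (3 * ‖z‖) / 2 = Real.exp (2 * ‖z‖) / 2 * Real.exp ‖z‖ by
    rw [div_mul_eq_mul_div, ← Real.exp_add]; ring_nf, mul_pow, ← Real.exp_nat_mul, ← mul_assoc]
  gcongr
  exact norm_abelPoly_div_factorial_le θ z two_pos n

theorem hasSum_gpdTerm_of_exp_lt (θ : ℂ) {z : ℂ} (hz : Real.exp (3 * ‖z‖) < 2) :
    HasSum (gpdTerm θ z) 1 := by
  obtain ⟨S, hS⟩ := summable_gpdDoubleTerm θ hz
  have hpoisson : HasSum (fun N => θ ^ N / N ! * Complex.exp (-θ)) 1 := by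
    have := (Complex.hasSum_exp θ).mul_right (Complex.exp (-θ))
    rwa [← Complex.exp_add, add_neg_cancel, Complex.exp_zero] at this
  have hdiag : HasSum (fun N => θ ^ N / N ! * Complex.exp (-θ)) S := by
    simpa only [sum_antidiagonal_gpdDoubleTerm] using hS.sum_antidiagonal
  rw [← hdiag.unique hpoisson]
  exact hS.prod_fiberwise (hasSum_gpdDoubleTerm_row θ z)

/-- The terms `gpdTerm θ z n` decay geometrically where `‖z‖ e^{1 - Re z} < 1`; the condition
`Re z < 1` selects the component of that set containing `0`. -/
def gpdDomain : Set ℂ := {z | ‖z‖ * Real.exp (1 - z.re) < 1 ∧ z.re < 1}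

lemma isOpen_gpdDomain : IsOpen gpdDomain :=
  (isOpen_lt (by fun_prop : Continuous fun z : ℂ => ‖z‖ * Real.exp (1 - z.re))
    continuous_const).inter (isOpen_lt Complex.continuous_re continuous_const)

lemma starConvex_gpdDomain : StarConvex ℝ 0 gpdDomain := by
  rintro z ⟨hz, hre⟩ a b ha hb hab
  simp only [smul_zero, zero_add, gpdDomain, Set.mem_ofPred_eq, norm_smul, Complex.smul_re,
    smul_eq_mul, Real.norm_eq_abs, abs_of_nonneg hb]
  have hb1 : b ≤ 1 := by linarith
  refine ⟨?_, by rcases le_or_gt z.re 0 with h | h <;> nlinarith⟩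
  have hshrink : b * Real.exp ((1 - b) * z.re) ≤ 1 :=
    calc b * Real.exp ((1 - b) * z.re) ≤ Real.exp (b - 1) * Real.exp (1 - b) := by
          gcongr
          · linarith [Real.add_one_le_exp (b - 1)]
          · exact mul_le_of_le_one_right (by linarith) hre.le
      _ = 1 := by rw [← Real.exp_add]; simp
  calc b * ‖z‖ * Real.exp (1 - b * z.re)
      = ‖z‖ * Real.exp (1 - z.re) * (b * Real.exp ((1 - b) * z.re)) := by
        rw [mul_mul_mul_comm, ← Real.exp_add]; ring_nf
    _ ≤ ‖z‖ * Real.exp (1 - z.re) := mul_le_of_le_one_right (by positivity) hshrink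
    _ < 1 := hz

lemma ofReal_mem_gpdDomain {l : ℝ} (h0 : 0 ≤ l) (h1 : l < 1) : (l : ℂ) ∈ gpdDomain := by
  refine ⟨?_, by simpa using h1⟩
  have hl : l < Real.exp (l - 1) := by
    linarith [Real.add_one_lt_exp (sub_ne_zero.mpr h1.ne)]
  calc ‖(l : ℂ)‖ * Real.exp (1 - l) = l * Real.exp (1 - l) := by
        simp [Complex.norm_real, abs_of_nonneg h0]
    _ < Real.exp (l - 1) * Real.exp (1 - l) := by gcongr
    _ = 1 := by rw [← Real.exp_add]; simp

lemma exists_exp_div_lt_one_of_mem_gpdDomain {z : ℂ} (hz : z ∈ gpdDomain) :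
    ∃ s > 0, Real.exp (s * ‖z‖ - z.re) / s < 1 := by
  rcases eq_or_ne z 0 with rfl | hz0
  · exact ⟨2, two_pos, by norm_num⟩
  · have hpos : 0 < ‖z‖ := norm_pos_iff.mpr hz0
    refine ⟨‖z‖⁻¹, inv_pos.mpr hpos, ?_⟩
    rw [inv_mul_cancel₀ hpos.ne', div_inv_eq_mul, mul_comm]
    exact hz.1

lemma summable_gpdTerm (θ : ℂ) {z : ℂ} (hz : z ∈ gpdDomain) : Summable (gpdTerm θ z) := by
  obtain ⟨s, hs, hlt⟩ := exists_exp_div_lt_one_of_mem_gpdDomain hz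
  exact Summable.of_norm_bounded
    ((summable_geometric_of_lt_one (by positivity) hlt).mul_left _) (norm_gpdTerm_le θ z hs)

lemma differentiableOn_tsum_gpdTerm (θ : ℂ) :
    DifferentiableOn ℂ (fun z => ∑' n, gpdTerm θ z n) gpdDomain := by
  intro z₀ hz₀
  obtain ⟨s, hs, hlt⟩ := exists_exp_div_lt_one_of_mem_gpdDomain hz₀
  obtain ⟨r, hr, hr1⟩ := exists_between hlt
  have hr0 : 0 ≤ r := (by positivity : 0 ≤ Real.exp (s * ‖z₀‖ - z₀.re) / s).trans hr.le
  set V := {z : ℂ | Real.exp (s * ‖z‖ - z.re) / s < r}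
  have hV : IsOpen V := isOpen_lt (by fun_prop) continuous_const
  have hdiff : DifferentiableOn ℂ (fun z => ∑' n, gpdTerm θ z n) V :=
    Complex.differentiableOn_tsum_of_summable_norm
      ((summable_geometric_of_lt_one hr0 hr1).mul_left _)
      (fun n => (differentiable_gpdTerm θ n).differentiableOn) hV
      (fun n z hz => (norm_gpdTerm_le θ z hs n).trans (by gcongr; exact hz.le))
  exact (hdiff.differentiableAt (hV.mem_nhds hr)).differentiableWithinAt

theorem hasSum_gpdTerm (θ : ℂ) {z : ℂ} (hz : z ∈ gpdDomain) : HasSum (gpdTerm θ z) 1 := by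
  have hanalytic : AnalyticOnNhd ℂ (fun z => ∑' n, gpdTerm θ z n) gpdDomain :=
    (differentiableOn_tsum_gpdTerm θ).analyticOnNhd isOpen_gpdDomain
  have hnear_zero : (fun z => ∑' n, gpdTerm θ z n) =ᶠ[𝓝 0] fun _ => 1 := by
    have : ∀ᶠ w in 𝓝 (0 : ℂ), Real.exp (3 * ‖w‖) < 2 :=
      (by fun_prop : Continuous fun w : ℂ => Real.exp (3 * ‖w‖)).continuousAt.eventually_lt
        continuousAt_const (by norm_num)
    exact this.mono fun w hw => (hasSum_gpdTerm_of_exp_lt θ hw).tsum_eq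
  have zero_mem : (0 : ℂ) ∈ gpdDomain := by simpa using ofReal_mem_gpdDomain le_rfl one_pos
  have htsum : ∑' n, gpdTerm θ z n = 1 :=
    hanalytic.eqOn_of_preconnected_of_eventuallyEq analyticOnNhd_const
    (starConvex_gpdDomain.isPathConnected zero_mem).isConnected.isPreconnected zero_mem
    hnear_zero hz
  exact htsum ▸ (summable_gpdTerm θ hz).hasSum

theorem gpd_is_probability (θ l : ℝ) (hθ : 0 < θ) (hl0 : 0 ≤ l) (hl1 : l < 1) :
    HasSum (fun n : ℕ =>
      θ * (θ + n * l) ^ ((n : ℝ) - 1) / n.factorial * Real.exp (-θ - n * l)) 1 := by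
  rw [← Complex.hasSum_ofReal, Complex.ofReal_one]
  convert hasSum_gpdTerm θ (ofReal_mem_gpdDomain hl0 hl1) with n
  rw [gpdTerm, ← abelPoly_eq_mul_rpow hθ.ne']
  push_cast
  ring
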